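/- Let n ≥ 2, N = 2^n, and let u : Fin N → ℂ satisfy ‖u j‖ = 1 for all j. Then there exist Φ ∈ ℝ, an angle α_0 ∈ ℝ, angles α_S ∈ ℝ for every nonempty subset S ⊆ {1, …, n−1}, and v : Fin 2^(n−1) → ℂ with ‖v k‖ = 1 for all k, such that for every j ∈ Fin N (with last bit b_n = j mod 2): u(j) = exp(i·Φ) · (∏_{S nonempty ⊆ {1,…,n−1}} e_S(α_S)(j)) · exp(i·α_0·(−1)^(1 + b_n)/2) · v(⌊j/2⌋). Equivalently, Matrix.diagonal u equals exp(i·Φ) times the product of the commuting diagonal matrices Λ_S[R_z(α_S)] over all nonempty S, times I_{2^(n−1)} ⊗ R_z(α_0), times (Matrix.diagonal v) ⊗ I_2. -/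

import Mathlib

/-!
Pairing the entries `u (2k)` and `u (2k+1)` writes them as `exp (∓ iθₖ/2) · wₖ` with `‖wₖ‖ = 1`,
which produces `v`. At index `j`, the controlled rotations together with `I ⊗ R_z(α₀)` contribute
`exp (± (i/2) ∑_{S ⊆ L(j)} α_S)`, where `L(j)` is the set of control lines whose bit in `j` is `1`
and `α_∅ = α₀`. Since `L(j)` determines `⌊j/2⌋`, Möbius inversion on the lattice of finite sets
yields angles with `∑_{S ⊆ L(j)} α_S = θ_{⌊j/2⌋}` for every `j`.
-/

/-- For `n ≥ 1` and `j < 2^n`, the quotient `j / 2` is a valid `(n-1)`-qubit index. -/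
lemma div2_lt {n : ℕ} (hn : 1 ≤ n) (j : Fin (2^n)) : (j : ℕ) / 2 < 2^(n-1) := by
  have h : (2:ℕ)^n = 2^(n-1) * 2 := by
    conv_lhs => rw [show n = (n-1) + 1 by omega]
    rw [pow_succ]
  have hj := j.isLt
  omega

/-- Diagonal entries of the controlled rotation `Λ_S[R_z(α)]` on `n` qubits (line `l`
holds bit position `n - l`): `exp(∓i·α/2)` (sign by the last bit `b_n`) when `b_k = 1`
for all `k ∈ S`, and `1` otherwise. -/
noncomputable def eS (n : ℕ) (S : Finset ℕ) (α : ℝ) (m : Fin (2^n)) : ℂ :=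
  if ∀ k ∈ S, Nat.testBit (m : ℕ) (n - k) = true then
    (if Nat.testBit (m : ℕ) 0 = true
      then Complex.exp (Complex.I * (α : ℂ) / 2)
      else Complex.exp (-(Complex.I * (α : ℂ) / 2)))
  else 1

open Finset Complex

theorem exists_sum_Iic_eq {𝕜 α : Type*} [Ring 𝕜] [PartialOrder α] [OrderBot α]
    [LocallyFiniteOrder α] (g : α → 𝕜) :
    ∃ f : α → 𝕜, ∀ x, ∑ y ∈ Iic x, f y = g x := by
  classical
  refine ⟨fun y => ∑ z ∈ Iic y, IncidenceAlgebra.mu 𝕜 z y * g z, fun x => ?_⟩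
  calc ∑ y ∈ Iic x, ∑ z ∈ Iic y, IncidenceAlgebra.mu 𝕜 z y * g z
      = ∑ z ∈ Iic x, (∑ y ∈ Icc z x, IncidenceAlgebra.mu 𝕜 z y) * g z := by
        simp_rw [sum_mul]
        exact sum_comm' fun y z => by simp only [mem_Iic, mem_Icc]; grind
    _ = g x := by simp [IncidenceAlgebra.sum_Icc_mu_right]

theorem Finset.filter_powerset_forall_mem {α : Type*} (s : Finset α) (p : α → Prop)
    [DecidablePred p] : s.powerset.filter (fun t => ∀ a ∈ t, p a) = (s.filter p).powerset := by
  ext t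
  simp only [mem_filter, mem_powerset, subset_iff]
  grind

theorem exists_half_angle_split {a b : ℂ} (ha : ‖a‖ = 1) (hb : ‖b‖ = 1) :
    ∃ θ : ℝ, ∃ w : ℂ, ‖w‖ = 1 ∧
      a = exp (-(I * θ / 2)) * w ∧ b = exp (I * θ / 2) * w := by
  refine ⟨b.arg - a.arg, exp (↑((a.arg + b.arg) / 2) * I), norm_exp_ofReal_mul_I _, ?_, ?_⟩
  · conv_lhs => rw [← norm_mul_exp_arg_mul_I a, ha]
    rw [← exp_add]; push_cast; ring_nf
  · conv_lhs => rw [← norm_mul_exp_arg_mul_I b, hb]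
    rw [← exp_add]; push_cast; ring_nf

theorem exists_pairwise_half_angle_split {n : ℕ} (hn : 1 ≤ n) {u : Fin (2^n) → ℂ}
    (hu : ∀ j, ‖u j‖ = 1) :
    ∃ (θ : Fin (2^(n-1)) → ℝ) (w : Fin (2^(n-1)) → ℂ), (∀ k, ‖w k‖ = 1) ∧
      ∀ j : Fin (2^n), u j =
        exp (I * θ ⟨j / 2, div2_lt hn j⟩ * (-1) ^ (1 + (j : ℕ) % 2) / 2) *
          w ⟨j / 2, div2_lt hn j⟩ := by
  have hpow : 2 ^ n = 2 * 2 ^ (n - 1) := by rw [← pow_succ']; congr; omega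
  choose θ w hw heven hodd using fun k : Fin (2^(n-1)) =>
    exists_half_angle_split (hu ⟨2 * k, by omega⟩) (hu ⟨2 * k + 1, by omega⟩)
  refine ⟨θ, w, hw, fun j => ?_⟩
  obtain h | h := Nat.mod_two_eq_zero_or_one j
  · convert heven ⟨j / 2, div2_lt hn j⟩ using 3
    · dsimp only; omega
    · rw [h]; ring
  · convert hodd ⟨j / 2, div2_lt hn j⟩ using 3
    · dsimp only; omega
    · rw [h]; ring

def activeLines (n j : ℕ) : Finset ℕ :=
  (Icc 1 (n - 1)).filter (fun l => Nat.testBit j (n - l))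

theorem div_two_eq_of_activeLines_eq {n j j' : ℕ} (hj : j < 2 ^ n) (hj' : j' < 2 ^ n)
    (h : activeLines n j = activeLines n j') : j / 2 = j' / 2 := by
  refine Nat.eq_of_testBit_eq fun i => ?_
  rw [Nat.testBit_div_two, Nat.testBit_div_two]
  by_cases hi : i + 1 < n
  · have := congrArg (n - (i + 1) ∈ ·) h
    simp only [activeLines, mem_filter, mem_Icc, show n - (n - (i + 1)) = i + 1 by omega] at this
    simpa [show 1 ≤ n - (i + 1) by omega, show n - (i + 1) ≤ n - 1 by omega] using this
  · have hle : 2 ^ n ≤ 2 ^ (i + 1) := Nat.pow_le_pow_right two_pos (by omega)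
    rw [Nat.testBit_eq_false_of_lt (by omega), Nat.testBit_eq_false_of_lt (by omega)]

theorem eS_eq_ite (n : ℕ) (S : Finset ℕ) (α : ℝ) (j : Fin (2^n)) :
    eS n S α j = if ∀ k ∈ S, Nat.testBit j (n - k) = true
      then exp (I * α * (-1) ^ (1 + (j : ℕ) % 2) / 2) else 1 := by
  unfold eS
  congr 1
  rw [Nat.testBit_zero]
  obtain h | h := Nat.mod_two_eq_zero_or_one j <;> norm_num [h, neg_div]

theorem prod_eS_eq_exp (n : ℕ) (α : Finset ℕ → ℝ) (j : Fin (2^n)) :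
    ∏ S ∈ (Icc 1 (n - 1)).powerset.erase ∅, eS n S (α S) j =
      exp (I * ↑(∑ S ∈ (activeLines n j).powerset.erase ∅, α S) *
        (-1) ^ (1 + (j : ℕ) % 2) / 2) := by
  simp_rw [eS_eq_ite, ← prod_filter, filter_erase, filter_powerset_forall_mem, ← exp_sum]
  push_cast
  rw [mul_sum, sum_mul, sum_div]
  rfl

/-- every diagonal unitary `u` on `n ≥ 2` qubits decomposes as a global
phase times the product of controlled rotations `Λ_S[R_z(α_S)]` over all nonempty
`S ⊆ {1, …, n-1}`, times `I ⊗ R_z(α₀)` on the last line, times a diagonal `v` on the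
first `n-1` lines (entrywise: the last bit is `b_n = j % 2`). -/
theorem diagonal_decomposes_via_controlled_rotations (n : ℕ) (hn : 2 ≤ n)
    (u : Fin (2^n) → ℂ) (hu : ∀ j, ‖u j‖ = 1) :
    ∃ (Φ α₀ : ℝ) (αf : Finset ℕ → ℝ) (v : Fin (2^(n-1)) → ℂ),
      (∀ k, ‖v k‖ = 1) ∧
      ∀ j : Fin (2^n),
        u j = Complex.exp (Complex.I * (Φ : ℂ)) *
          (∏ S ∈ (Finset.Icc 1 (n-1)).powerset.erase ∅, eS n S (αf S) j) *
          Complex.exp (Complex.I * (α₀ : ℂ) * (-1)^(1 + (j : ℕ) % 2) / 2) *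
          v ⟨(j : ℕ) / 2, div2_lt (by omega) j⟩ := by
  obtain ⟨θ, w, hw, hsplit⟩ := exists_pairwise_half_angle_split (by omega) hu
  obtain ⟨g, hg⟩ : ∃ g : Finset ℕ → ℝ,
      ∀ j : Fin (2^n), g (activeLines n j) = θ ⟨j / 2, div2_lt (by omega) j⟩ :=
    ⟨_, Function.FactorsThrough.extend_apply (fun (j j' : Fin (2^n)) h =>
      congrArg θ (Fin.ext (div_two_eq_of_activeLines_eq j.isLt j'.isLt h))) 0⟩
  obtain ⟨α, hα⟩ := exists_sum_Iic_eq g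
  refine ⟨0, α ∅, α, w, hw, fun j => ?_⟩
  have hsum : ∑ S ∈ (activeLines n j).powerset.erase ∅, α S + α ∅ =
      θ ⟨j / 2, div2_lt (by omega) j⟩ := by
    rw [sum_erase_add _ _ (empty_mem_powerset _), ← Iic_eq_powerset, hα, hg]
  rw [hsplit j, prod_eS_eq_exp, ofReal_zero, mul_zero, exp_zero, one_mul, ← exp_add, ← hsum]
  push_cast
  ring_nf
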